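/- There exist constants C₀, C₁ > 0 depending only on δ with the following property. Let A ∈ ℂ^{m×N} satisfy the restricted isometry property of order 2s with constant δ_{2s} = δ < √2 − 1, let x ∈ ℂ^N, let η ≥ 0, and let y ∈ ℂ^m satisfy ‖y − Ax‖₂ ≤ η. Then any minimizer x♯ of ‖z‖₁ over all z ∈ ℂ^N with ‖y − Az‖₂ ≤ η satisfies ‖x♯ − x‖₂ ≤ C₀ σ_s(x)₁ / √s + C₁ η. In particular, since σ_s(x)₁ is invariant under flipping, the same error bound holds for recovering the flip of x from the same measurement matrix. -/

import Mathlib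

/-- The ℓ¹ norm of a vector in ℂ^N. -/
noncomputable def l1norm {N : ℕ} (z : Fin N → ℂ) : ℝ := ∑ i, ‖z i‖

/-- The ℓ² (Euclidean) norm of a vector. -/
noncomputable def l2norm {N : ℕ} (z : Fin N → ℂ) : ℝ := Real.sqrt (∑ i, ‖z i‖ ^ 2)

/-- `x` is `s`-sparse: it has at most `s` nonzero entries. -/
def IsSparse {N : ℕ} (s : ℕ) (x : Fin N → ℂ) : Prop := {i | x i ≠ 0}.ncard ≤ s

/-- `A` satisfies the restricted isometry property of order `k` with constant `δ`:
`(1−δ)‖x‖₂² ≤ ‖Ax‖₂² ≤ (1+δ)‖x‖₂²` for every `k`-sparse `x`. -/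
def HasRIP {m N : ℕ} (A : Matrix (Fin m) (Fin N) ℂ) (k : ℕ) (δ : ℝ) : Prop :=
  ∀ x : Fin N → ℂ, IsSparse k x →
    (1 - δ) * ∑ i, ‖x i‖ ^ 2 ≤ ∑ i, ‖A.mulVec x i‖ ^ 2 ∧
    ∑ i, ‖A.mulVec x i‖ ^ 2 ≤ (1 + δ) * ∑ i, ‖x i‖ ^ 2

/-- `σ_s(x)₁`: the error of the best `s`-term approximation of `x` in the ℓ¹ norm. -/
noncomputable def bestApprox {N : ℕ} (s : ℕ) (x : Fin N → ℂ) : ℝ :=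
  sInf {t : ℝ | ∃ w : Fin N → ℂ, IsSparse s w ∧ t = l1norm (x - w)}

/-- The flip of `x ∈ ℂ^N`: `x'_i = x_{N+1−i}` (in one-based indexing). -/
def flipVec {N : ℕ} (x : Fin N → ℂ) : Fin N → ℂ := fun i => x i.rev

/-!
Write `h = x♯ - x`, let `T₀` carry the `s` largest entries of `x`, and cut `T₀ᶜ` into blocks
`T₁, T₂, …` of `s` entries each, in order of decreasing `|h i|`. Minimality of `‖x♯‖₁` puts `h`
in the cone `‖h_{T₀ᶜ}‖₁ ≤ ‖h_{T₀}‖₁ + 2 σ_s(x)₁`, and the ordering of the blocks gives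
`∑_{j ≥ 2} ‖h_{T_j}‖₂ ≤ ‖h_{T₀ᶜ}‖₁ / √s ≤ ‖h_{T₀ ∪ T₁}‖₂ + 2 σ_s(x)₁ / √s`. The RIP, through
the near-orthogonality of `A` on disjointly supported sparse vectors, bounds the head
`h_{T₀ ∪ T₁}` by a multiple of `‖A h‖₂ ≤ 2η` plus `ρ = √2 δ / (1 - δ)` times that tail; since
`ρ < 1`, the two estimates close up. Flipping only permutes the coordinates, which changes
neither sparsity nor `ℓ¹` norms.
-/

open Finset Function RealInnerProductSpace

section RestrictedIsometry

variable {E F : Type*} [NormedAddCommGroup E] [InnerProductSpace ℝ E]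
  [NormedAddCommGroup F] [InnerProductSpace ℝ F]

lemma norm_add_norm_le_sqrt_two_mul_of_inner_eq_zero {u v : E} (huv : ⟪u, v⟫ = 0) :
    ‖u‖ + ‖v‖ ≤ √2 * ‖u + v‖ := by
  have hsq : ‖u + v‖ ^ 2 = ‖u‖ ^ 2 + ‖v‖ ^ 2 := by
    rw [norm_add_sq_real, huv]; ring
  rw [← Real.sqrt_sq (norm_nonneg (u + v)), ← Real.sqrt_mul zero_le_two, hsq]
  apply Real.le_sqrt_of_sq_le
  nlinarith [sq_nonneg (‖u‖ - ‖v‖)]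

lemma abs_inner_map_le_of_inner_eq_zero (L : E →ₗ[ℝ] F) {δ : ℝ} {u v : E} (huv : ⟪u, v⟫ = 0)
    (hL : ∀ a b : ℝ, (1 - δ) * ‖a • u + b • v‖ ^ 2 ≤ ‖L (a • u + b • v)‖ ^ 2 ∧
      ‖L (a • u + b • v)‖ ^ 2 ≤ (1 + δ) * ‖a • u + b • v‖ ^ 2) :
    |⟪L u, L v⟫| ≤ δ * (‖u‖ * ‖v‖) := by
  -- polarize `a • u ± b • v`, then take `a = ‖v‖` and `b = ±‖u‖`
  have hpolar : ∀ a b : ℝ,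
      4 * (a * b) * ⟪L u, L v⟫ ≤ 2 * δ * (a ^ 2 * ‖u‖ ^ 2 + b ^ 2 * ‖v‖ ^ 2) := by
    intro a b
    have hdom : ∀ c : ℝ, ‖a • u + c • v‖ ^ 2 = a ^ 2 * ‖u‖ ^ 2 + c ^ 2 * ‖v‖ ^ 2 := by
      intro c
      rw [norm_add_sq_real, real_inner_smul_left, real_inner_smul_right, huv, norm_smul,
        norm_smul, Real.norm_eq_abs, Real.norm_eq_abs, mul_pow, mul_pow, sq_abs, sq_abs]
      ring
    have hcod : ∀ c : ℝ, ‖L (a • u + c • v)‖ ^ 2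
        = a ^ 2 * ‖L u‖ ^ 2 + 2 * (a * c) * ⟪L u, L v⟫ + c ^ 2 * ‖L v‖ ^ 2 := by
      intro c
      rw [map_add, map_smul, map_smul, norm_add_sq_real, real_inner_smul_left,
        real_inner_smul_right, norm_smul, norm_smul, Real.norm_eq_abs, Real.norm_eq_abs,
        mul_pow, mul_pow, sq_abs, sq_abs]
      ring
    have hup := (hL a b).2
    have hlow := (hL a (-b)).1
    rw [hdom, hcod] at hup hlow
    linarith
  rcases (mul_nonneg (norm_nonneg u) (norm_nonneg v)).eq_or_lt with h0 | hpos
  · rcases mul_eq_zero.mp h0.symm with hu | hv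
    · simp [norm_eq_zero.mp hu]
    · simp [norm_eq_zero.mp hv]
  · have h₁ := hpolar ‖v‖ ‖u‖
    have h₂ := hpolar ‖v‖ (-‖u‖)
    rw [abs_le]
    constructor <;> nlinarith

lemma one_sub_mul_norm_le_of_almost_orthogonal (L : E →ₗ[ℝ] F) {δ : ℝ} (hδ : 0 ≤ δ)
    {u₀ u₁ : E} (h01 : ⟪u₀, u₁⟫ = 0) {ι : Type*} (t : Finset ι) (w : ι → E)
    (hlow : (1 - δ) * ‖u₀ + u₁‖ ^ 2 ≤ ‖L (u₀ + u₁)‖ ^ 2)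
    (hup : ‖L (u₀ + u₁)‖ ^ 2 ≤ (1 + δ) * ‖u₀ + u₁‖ ^ 2)
    (h₀ : ∀ j ∈ t, |⟪L u₀, L (w j)⟫| ≤ δ * (‖u₀‖ * ‖w j‖))
    (h₁ : ∀ j ∈ t, |⟪L u₁, L (w j)⟫| ≤ δ * (‖u₁‖ * ‖w j‖)) :
    (1 - δ) * ‖u₀ + u₁‖
      ≤ √(1 + δ) * ‖L (u₀ + u₁ + ∑ j ∈ t, w j)‖ + √2 * δ * ∑ j ∈ t, ‖w j‖ := by
  set u := u₀ + u₁
  have hhalves := norm_add_norm_le_sqrt_two_mul_of_inner_eq_zero h01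
  have hLu : ‖L u‖ ≤ √(1 + δ) * ‖u‖ := by
    have := Real.sqrt_le_sqrt hup
    rwa [Real.sqrt_sq (norm_nonneg _), Real.sqrt_mul' _ (sq_nonneg _),
      Real.sqrt_sq (norm_nonneg _)] at this
  have hsplit : ‖L u‖ ^ 2
      = ⟪L u, L (u + ∑ j ∈ t, w j)⟫ - ∑ j ∈ t, ⟪L u, L (w j)⟫ := by
    rw [map_add L u, map_sum, inner_add_right, inner_sum, real_inner_self_eq_norm_sq]
    ring
  have hhead : ⟪L u, L (u + ∑ j ∈ t, w j)⟫ ≤ √(1 + δ) * ‖u‖ * ‖L (u + ∑ j ∈ t, w j)‖ :=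
    (real_inner_le_norm _ _).trans
      (mul_le_mul_of_nonneg_right hLu (norm_nonneg _))
  have htail : -∑ j ∈ t, ⟪L u, L (w j)⟫ ≤ √2 * δ * ‖u‖ * ∑ j ∈ t, ‖w j‖ := by
    rw [← sum_neg_distrib, mul_sum]
    refine sum_le_sum fun j hj => ?_
    have hw := norm_nonneg (w j)
    have hcross : -⟪L u, L (w j)⟫ ≤ δ * ((‖u₀‖ + ‖u₁‖) * ‖w j‖) := by
      rw [map_add, inner_add_left]
      linarith [neg_abs_le ⟪L u₀, L (w j)⟫, neg_abs_le ⟪L u₁, L (w j)⟫, h₀ j hj, h₁ j hj]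
    linarith [mul_le_mul_of_nonneg_right hhalves (mul_nonneg hδ hw)]
  rcases (norm_nonneg u).eq_or_lt with hu | hu
  · rw [← hu, mul_zero]
    positivity
  · refine le_of_mul_le_mul_right ?_ hu
    linarith

end RestrictedIsometry

section Restriction

variable {ι : Type*}

/-- The paper's `v_S`, as an element of `ℓ²`. -/
noncomputable def restrictL2 (S : Finset ι) (v : ι → ℂ) : EuclideanSpace ℂ ι :=
  WithLp.toLp 2 ((S : Set ι).indicator v)

lemma restrictL2_apply_of_notMem {S : Finset ι} (v : ι → ℂ) {i : ι} (hi : i ∉ S) :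
    restrictL2 S v i = 0 :=
  Set.indicator_of_notMem (by simpa using hi) v

lemma norm_restrictL2 [Fintype ι] (S : Finset ι) (v : ι → ℂ) :
    ‖restrictL2 S v‖ = √(∑ i ∈ S, ‖v i‖ ^ 2) := by
  rw [EuclideanSpace.norm_eq, ← sum_indicator_subset _ (subset_univ S)]
  congr 1
  refine sum_congr rfl fun i _ => ?_
  by_cases hi : i ∈ S <;> simp [restrictL2, hi]

lemma restrictL2_univ [Fintype ι] (v : ι → ℂ) : restrictL2 univ v = WithLp.toLp 2 v := by
  simp [restrictL2]

lemma restrictL2_union [DecidableEq ι] {S T : Finset ι} (hST : Disjoint S T) (v : ι → ℂ) :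
    restrictL2 (S ∪ T) v = restrictL2 S v + restrictL2 T v := by
  rw [restrictL2, coe_union, Set.indicator_union_of_disjoint (disjoint_coe.mpr hST)]
  rfl

lemma restrictL2_biUnion [DecidableEq ι] {κ : Type*} {t : Finset κ} {B : κ → Finset ι}
    (hB : (t : Set κ).PairwiseDisjoint B) (v : ι → ℂ) :
    restrictL2 (t.biUnion B) v = ∑ j ∈ t, restrictL2 (B j) v := by
  classical
  induction t using Finset.induction_on with
  | empty => simp [restrictL2, ← Pi.zero_def]
  | insert j t hj ih =>
    rw [biUnion_insert, sum_insert hj, restrictL2_union, ih (hB.subset (by simp))]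
    exact (disjoint_biUnion_right _ _ _).mpr fun k hk =>
      hB (by simp) (by simp [hk]) (fun h => hj (h ▸ hk))

lemma real_inner_eq_zero_of_disjoint [Fintype ι] {S T : Finset ι} (hST : Disjoint S T)
    {u v : EuclideanSpace ℂ ι} (hu : ∀ i ∉ S, u i = 0) (hv : ∀ i ∉ T, v i = 0) :
    ⟪u, v⟫ = 0 := by
  rw [PiLp.inner_apply]
  refine sum_eq_zero fun i _ => ?_
  by_cases hi : i ∈ S
  · simp [hv i (disjoint_left.mp hST hi)]
  · simp [hu i hi]

lemma norm_restrictL2_le_of_subset [Fintype ι] {S T : Finset ι} (hST : S ⊆ T) (v : ι → ℂ) :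
    ‖restrictL2 S v‖ ≤ ‖restrictL2 T v‖ := by
  rw [norm_restrictL2, norm_restrictL2]
  exact Real.sqrt_le_sqrt (sum_le_sum_of_subset_of_nonneg hST fun _ _ _ => by positivity)

lemma sum_norm_le_sqrt_card_mul_norm_restrictL2 [Fintype ι] (S : Finset ι) (v : ι → ℂ) :
    ∑ i ∈ S, ‖v i‖ ≤ √(#S : ℝ) * ‖restrictL2 S v‖ := by
  rw [norm_restrictL2]
  simpa using Real.sum_mul_le_sqrt_mul_sqrt S (fun _ => 1) (fun i => ‖v i‖)

lemma toLp_eq_restrictL2_add_sum [Fintype ι] [DecidableEq ι] (v : ι → ℂ) {T₀ : Finset ι}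
    {n : ℕ} {B : ℕ → Finset ι} (hBB : Pairwise (Disjoint on B))
    (hT₀B : ∀ j, Disjoint T₀ (B j)) (hcover : T₀ ∪ (range (n + 1)).biUnion B = univ) :
    WithLp.toLp 2 v = restrictL2 (T₀ ∪ B 0) v + ∑ j ∈ range n, restrictL2 (B (j + 1)) v := by
  rw [← restrictL2_univ, ← hcover,
    restrictL2_union ((disjoint_biUnion_right _ _ _).mpr fun j _ => hT₀B j),
    restrictL2_biUnion (hBB.set_pairwise _), sum_range_succ', restrictL2_union (hT₀B 0)]
  abel

end Restriction

section RIP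

variable {m N k s : ℕ} {δ : ℝ} {A : Matrix (Fin m) (Fin N) ℂ}

/-- Real-linear, so that the real inner product `Re ⟪u, v⟫` of `ℓ²(ℂ)` can be used. -/
noncomputable def Matrix.toEuclideanRealLin (A : Matrix (Fin m) (Fin N) ℂ) :
    EuclideanSpace ℂ (Fin N) →ₗ[ℝ] EuclideanSpace ℂ (Fin m) :=
  (Matrix.toLpLin 2 2 A).restrictScalars ℝ

lemma l2norm_eq_norm (z : Fin N → ℂ) : l2norm z = ‖WithLp.toLp 2 z‖ := by
  rw [EuclideanSpace.norm_eq]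
  rfl

lemma isSparse_of_forall_notMem_eq_zero {S : Finset (Fin N)} (hS : #S ≤ k) {z : Fin N → ℂ}
    (hz : ∀ i ∉ S, z i = 0) : IsSparse k z :=
  (Set.ncard_le_ncard (fun i hi => by by_contra h; exact hi (hz i h)) S.finite_toSet).trans
    ((Set.ncard_coe_finset S).trans_le hS)

lemma HasRIP.sq_norm_bounds (hA : HasRIP A k δ) {S : Finset (Fin N)} (hS : #S ≤ k)
    {w : EuclideanSpace ℂ (Fin N)} (hw : ∀ i ∉ S, w i = 0) :
    (1 - δ) * ‖w‖ ^ 2 ≤ ‖A.toEuclideanRealLin w‖ ^ 2 ∧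
      ‖A.toEuclideanRealLin w‖ ^ 2 ≤ (1 + δ) * ‖w‖ ^ 2 := by
  rw [EuclideanSpace.norm_sq_eq, EuclideanSpace.norm_sq_eq]
  exact hA w.ofLp (isSparse_of_forall_notMem_eq_zero hS hw)

lemma HasRIP.abs_inner_le (hA : HasRIP A (2 * s) δ) {S T : Finset (Fin N)} (hST : Disjoint S T)
    (hS : #S ≤ s) (hT : #T ≤ s) {u v : EuclideanSpace ℂ (Fin N)} (hu : ∀ i ∉ S, u i = 0)
    (hv : ∀ i ∉ T, v i = 0) :
    |⟪A.toEuclideanRealLin u, A.toEuclideanRealLin v⟫| ≤ δ * (‖u‖ * ‖v‖) :=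
  abs_inner_map_le_of_inner_eq_zero _ (real_inner_eq_zero_of_disjoint hST hu hv) fun a b =>
    hA.sq_norm_bounds ((card_union_le S T).trans (by omega)) fun i hi => by
      rw [mem_union, not_or] at hi
      simp [hu i hi.1, hv i hi.2]

lemma HasRIP.head_bound (hA : HasRIP A (2 * s) δ) (hδ : 0 ≤ δ) (h : Fin N → ℂ)
    {T₀ : Finset (Fin N)} {n : ℕ} {B : ℕ → Finset (Fin N)} (hT₀ : #T₀ ≤ s)
    (hB : ∀ j, #(B j) ≤ s) (hBB : Pairwise (Disjoint on B)) (hT₀B : ∀ j, Disjoint T₀ (B j))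
    (hcover : T₀ ∪ (range (n + 1)).biUnion B = univ) :
    (1 - δ) * ‖restrictL2 (T₀ ∪ B 0) h‖ ≤ √(1 + δ) * l2norm (A.mulVec h)
      + √2 * δ * ∑ j ∈ range n, ‖restrictL2 (B (j + 1)) h‖ := by
  have hsupp : ∀ S, ∀ i ∉ S, restrictL2 S h i = 0 := fun S i => restrictL2_apply_of_notMem h
  have hB0 : ∀ j, Disjoint (B 0) (B (j + 1)) := fun j => hBB (by omega)
  have hhead := hA.sq_norm_bounds ((card_union_le _ _).trans (by linarith [hB 0]))
    (hsupp (T₀ ∪ B 0))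
  rw [restrictL2_union (hT₀B 0)] at hhead
  have := one_sub_mul_norm_le_of_almost_orthogonal A.toEuclideanRealLin hδ
    (real_inner_eq_zero_of_disjoint (hT₀B 0) (hsupp _) (hsupp _)) (range n)
    (fun j => restrictL2 (B (j + 1)) h) hhead.1 hhead.2
    (fun j _ => hA.abs_inner_le (hT₀B (j + 1)) hT₀ (hB _) (hsupp _) (hsupp _))
    (fun j _ => hA.abs_inner_le (hB0 j) (hB 0) (hB _) (hsupp _) (hsupp _))
  rw [← restrictL2_union (hT₀B 0), ← toLp_eq_restrictL2_add_sum h hBB hT₀B hcover] at this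
  rwa [l2norm_eq_norm]

end RIP

section Blocks

variable {α : Type*}

lemma sqrt_sum_sq_le_sum_div_sqrt {g : α → ℝ} (hg : 0 ≤ g) {S S' : Finset α} {k : ℕ}
    (hk : 0 < k) (hS' : #S' ≤ k) (hS : k ≤ #S) (hle : ∀ a ∈ S', ∀ b ∈ S, g a ≤ g b) :
    √(∑ a ∈ S', g a ^ 2) ≤ (∑ b ∈ S, g b) / √k := by
  set M := ∑ b ∈ S, g b
  have hM : 0 ≤ M := sum_nonneg fun b _ => hg b
  have hk' : (0 : ℝ) < k := by exact_mod_cast hk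
  have hpt : ∀ a ∈ S', g a ≤ M / k := fun a ha => by
    rw [le_div_iff₀ hk']
    calc g a * k ≤ g a * #S := mul_le_mul_of_nonneg_left (by exact_mod_cast hS) (hg a)
      _ ≤ M := by simpa [nsmul_eq_mul, mul_comm] using card_nsmul_le_sum S g (g a) (hle a ha)
  rw [Real.sqrt_le_left (by positivity), div_pow, Real.sq_sqrt hk'.le]
  calc ∑ a ∈ S', g a ^ 2 ≤ ∑ a ∈ S', (M / k) ^ 2 :=
        sum_le_sum fun a ha => pow_le_pow_left₀ (hg a) (hpt a ha) 2
    _ = #S' * (M / k) ^ 2 := by rw [sum_const, nsmul_eq_mul]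
    _ ≤ k * (M / k) ^ 2 := by gcongr
    _ = M ^ 2 / k := by field_simp

variable [DecidableEq α]

lemma exists_subset_card_eq_forall_le (g : α → ℝ) {U : Finset α} {k : ℕ} (hk : k ≤ #U) :
    ∃ S ⊆ U, #S = k ∧ ∀ i ∈ S, ∀ j ∈ U \ S, g j ≤ g i := by
  obtain ⟨S, hSmem, hSmax⟩ := (U.powersetCard k).exists_max_image (fun S => ∑ i ∈ S, g i)
    (powersetCard_nonempty.mpr hk)
  rw [mem_powersetCard] at hSmem
  refine ⟨S, hSmem.1, hSmem.2, fun i hi j hj => ?_⟩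
  rw [mem_sdiff] at hj
  by_contra! hlt
  -- exchanging `i` for `j` would increase the sum
  have hj' : j ∉ S.erase i := fun h => hj.2 (mem_of_mem_erase h)
  have hswap := hSmax (insert j (S.erase i)) <| mem_powersetCard.mpr
    ⟨insert_subset hj.1 ((erase_subset i S).trans hSmem.1), by
      rw [card_insert_of_notMem hj', card_erase_of_mem hi, ← hSmem.2]
      have := card_pos.mpr ⟨i, hi⟩
      omega⟩
  rw [sum_insert hj', sum_erase_eq_sub hi] at hswap
  linarith

/-- The blocks `T₁, T₂, …` of the paper are `B 0, B 1, …`. -/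
structure IsSortedBlocks (g : α → ℝ) (k : ℕ) (U : Finset α) (n : ℕ) (B : ℕ → Finset α) :
    Prop where
  subset : ∀ j, B j ⊆ U
  pairwise_disjoint : Pairwise (Disjoint on B)
  biUnion_eq : (range (n + 1)).biUnion B = U
  card_le : ∀ j, #(B j) ≤ k
  card_eq : ∀ j, (B (j + 1)).Nonempty → #(B j) = k
  le_of_mem : ∀ j, ∀ a ∈ B (j + 1), ∀ b ∈ B j, g a ≤ g b

lemma exists_isSortedBlocks (g : α → ℝ) {k : ℕ} (hk : 0 < k) (U : Finset α) :
    ∃ n B, IsSortedBlocks g k U n B := by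
  induction U using Finset.strongInduction with
  | H U ih =>
  rcases U.eq_empty_or_nonempty with rfl | hU
  · exact ⟨0, fun _ => ∅, fun _ => empty_subset _, fun _ _ _ => disjoint_empty_left _,
      by simp, by simp, by simp, by simp⟩
  obtain ⟨S, hSU, hScard, hSmax⟩ := exists_subset_card_eq_forall_le g (min_le_right k #U)
  have hS : S.Nonempty := card_pos.mp (by have := card_pos.mpr hU; omega)
  obtain ⟨n, B, hB⟩ := ih (U \ S) (sdiff_ssubset hSU hS)
  have hSB : ∀ j, Disjoint S (B j) := fun j => disjoint_sdiff.mono_right (hB.subset j)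
  refine ⟨n + 1, fun | 0 => S | j + 1 => B j, ⟨?_, ?_, ?_, ?_, ?_, ?_⟩⟩
  · rintro (_ | j)
    exacts [hSU, (hB.subset j).trans sdiff_subset]
  · rintro (_ | i) (_ | j) hij
    exacts [absurd rfl hij, hSB j, (hSB i).symm, hB.pairwise_disjoint fun h => hij (h ▸ rfl)]
  · rw [range_add_one', biUnion_insert, map_eq_image, image_biUnion]
    show S ∪ (range (n + 1)).biUnion B = U
    rw [hB.biUnion_eq, union_sdiff_of_subset hSU]
  · rintro (_ | j)
    exacts [hScard ▸ min_le_left _ _, hB.card_le j]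
  · rintro (_ | j) hne
    · have := card_pos.mpr (hne.mono (hB.subset 0))
      have := card_sdiff_of_subset hSU
      show #S = k
      omega
    · exact hB.card_eq j hne
  · rintro (_ | j)
    exacts [fun a ha b hb => hSmax b hb a (hB.subset 0 ha), hB.le_of_mem j]

lemma IsSortedBlocks.sum_sqrt_sum_sq_le {g : α → ℝ} {k : ℕ} {U : Finset α} {n : ℕ}
    {B : ℕ → Finset α} (hB : IsSortedBlocks g k U n B) (hg : 0 ≤ g) (hk : 0 < k) :
    ∑ j ∈ range n, √(∑ a ∈ B (j + 1), g a ^ 2) ≤ (∑ a ∈ U, g a) / √k := by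
  have hblock : ∀ j, 0 ≤ (∑ a ∈ B j, g a) / √k := fun j =>
    div_nonneg (sum_nonneg fun a _ => hg a) (Real.sqrt_nonneg _)
  calc ∑ j ∈ range n, √(∑ a ∈ B (j + 1), g a ^ 2)
      ≤ ∑ j ∈ range n, (∑ a ∈ B j, g a) / √k := sum_le_sum fun j _ => ?_
    _ ≤ ∑ j ∈ range (n + 1), (∑ a ∈ B j, g a) / √k :=
        sum_le_sum_of_subset_of_nonneg (range_subset_range.mpr (by omega)) fun j _ _ => hblock j
    _ = (∑ a ∈ U, g a) / √k := by
        rw [← sum_div, ← sum_biUnion (hB.pairwise_disjoint.set_pairwise _), hB.biUnion_eq]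
  rcases (B (j + 1)).eq_empty_or_nonempty with hemp | hne
  · rw [hemp, sum_empty, Real.sqrt_zero]
    exact hblock j
  · exact sqrt_sum_sq_le_sum_div_sqrt hg hk (hB.card_le _) (hB.card_eq j hne).ge
      (hB.le_of_mem j)

end Blocks

section BestApproximation

lemma exists_card_le_forall_sum_le {α : Type*} [Fintype α] (f : α → ℝ) (s : ℕ) :
    ∃ T : Finset α, #T ≤ s ∧ ∀ S : Finset α, #S ≤ s → ∑ i ∈ S, f i ≤ ∑ i ∈ T, f i := by
  obtain ⟨T, hT, hmax⟩ := (univ.powerset.filter (#· ≤ s)).exists_max_image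
    (fun S => ∑ i ∈ S, f i) ⟨∅, by simp⟩
  exact ⟨T, (mem_filter.mp hT).2, fun S hS => hmax S (by simpa using hS)⟩

variable {N s : ℕ}

lemma sum_compl_le_of_l1norm_add_le {x h : Fin N → ℂ} (hmin : l1norm (x + h) ≤ l1norm x)
    (S : Finset (Fin N)) :
    ∑ i ∈ Sᶜ, ‖h i‖ ≤ ∑ i ∈ S, ‖h i‖ + 2 * ∑ i ∈ Sᶜ, ‖x i‖ := by
  have hS : ∑ i ∈ S, (‖x i‖ - ‖h i‖) ≤ ∑ i ∈ S, ‖x i + h i‖ :=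
    sum_le_sum fun i _ => norm_sub_le_norm_add _ _
  have hSc : ∑ i ∈ Sᶜ, (‖h i‖ - ‖x i‖) ≤ ∑ i ∈ Sᶜ, ‖x i + h i‖ :=
    sum_le_sum fun i _ => add_comm (x i) (h i) ▸ norm_sub_le_norm_add _ _
  rw [sum_sub_distrib] at hS hSc
  unfold l1norm at hmin
  rw [← sum_add_sum_compl S, ← sum_add_sum_compl S (fun i => ‖x i‖)] at hmin
  simp only [Pi.add_apply] at hmin
  linarith

lemma sum_compl_le_bestApprox {x : Fin N → ℂ} {T : Finset (Fin N)}
    (hT : ∀ S : Finset (Fin N), #S ≤ s → ∑ i ∈ S, ‖x i‖ ≤ ∑ i ∈ T, ‖x i‖) :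
    ∑ i ∈ Tᶜ, ‖x i‖ ≤ bestApprox s x := by
  classical
  refine le_csInf ⟨_, 0, by simp [IsSparse], rfl⟩ ?_
  rintro _ ⟨w, hw, rfl⟩
  set S := univ.filter (w · ≠ 0)
  have hS : #S ≤ s := by
    rwa [IsSparse, ← coe_filter_univ, Set.ncard_coe_finset] at hw
  have hTS := hT S hS
  have hT' := sum_add_sum_compl T (fun i => ‖x i‖)
  have hS' := sum_add_sum_compl S (fun i => ‖x i‖)
  calc ∑ i ∈ Tᶜ, ‖x i‖ ≤ ∑ i ∈ Sᶜ, ‖x i‖ := by linarith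
    _ = ∑ i ∈ Sᶜ, ‖(x - w) i‖ :=
        sum_congr rfl fun i hi => by simp [S] at hi; simp [hi]
    _ ≤ l1norm (x - w) :=
        sum_le_sum_of_subset_of_nonneg (subset_univ _) fun _ _ _ => norm_nonneg _

end BestApproximation

section Recovery

variable {m N s : ℕ} {δ : ℝ} {A : Matrix (Fin m) (Fin N) ℂ}

lemma l2norm_mulVec_sub_le {x xs : Fin N → ℂ} {y : Fin m → ℂ} {η : ℝ}
    (hy : l2norm (y - A.mulVec x) ≤ η) (hxs : l2norm (y - A.mulVec xs) ≤ η) :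
    l2norm (A.mulVec (xs - x)) ≤ 2 * η := by
  have hdiff : A.mulVec (xs - x) = (y - A.mulVec x) - (y - A.mulVec xs) := by
    rw [Matrix.mulVec_sub]
    abel
  rw [l2norm_eq_norm] at hy hxs ⊢
  rw [hdiff, WithLp.toLp_sub]
  linarith [norm_sub_le (WithLp.toLp 2 (y - A.mulVec x)) (WithLp.toLp 2 (y - A.mulVec xs))]

lemma IsSortedBlocks.sum_norm_restrictL2_succ_le {h : Fin N → ℂ} {T₀ : Finset (Fin N)} {n : ℕ}
    {B : ℕ → Finset (Fin N)} (hB : IsSortedBlocks (fun i => ‖h i‖) s T₀ᶜ n B) (hs : 0 < s)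
    (hT₀ : #T₀ ≤ s) {c : ℝ} (hcone : ∑ i ∈ T₀ᶜ, ‖h i‖ ≤ ∑ i ∈ T₀, ‖h i‖ + c) :
    ∑ j ∈ range n, ‖restrictL2 (B (j + 1)) h‖ ≤ ‖restrictL2 T₀ h‖ + c / √s := by
  have hsqrt_s : 0 < √(s : ℝ) := Real.sqrt_pos.mpr (by exact_mod_cast hs)
  calc ∑ j ∈ range n, ‖restrictL2 (B (j + 1)) h‖ ≤ (∑ i ∈ T₀ᶜ, ‖h i‖) / √s := by
        simpa only [norm_restrictL2] using hB.sum_sqrt_sum_sq_le (fun i => norm_nonneg _) hs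
    _ ≤ (∑ i ∈ T₀, ‖h i‖ + c) / √s := by gcongr
    _ ≤ (√s * ‖restrictL2 T₀ h‖ + c) / √s := by
      gcongr
      exact (sum_norm_le_sqrt_card_mul_norm_restrictL2 T₀ h).trans (by gcongr)
    _ = ‖restrictL2 T₀ h‖ + c / √s := by field_simp

/-- The constants are the paper's `C₀ = 2 (1 + ρ) / (1 - ρ)` and
`C₁ = 4 √(1 + δ) / ((1 - δ) (1 - ρ))`, where `ρ = √2 δ / (1 - δ)`. -/
theorem HasRIP.l2norm_sub_le (hA : HasRIP A (2 * s) δ) (hδ : 0 ≤ δ)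
    (hβ : 0 < 1 - (1 + √2) * δ) (hs : 0 < s) {x xs : Fin N → ℂ} {y : Fin m → ℂ} {η : ℝ}
    (hy : l2norm (y - A.mulVec x) ≤ η) (hxs : l2norm (y - A.mulVec xs) ≤ η)
    (hmin : l1norm xs ≤ l1norm x) :
    l2norm (xs - x) ≤ (2 + 4 * √2 * δ / (1 - (1 + √2) * δ)) * bestApprox s x / √s
      + 4 * √(1 + δ) / (1 - (1 + √2) * δ) * η := by
  classical
  set h := xs - x
  set β := 1 - (1 + √2) * δ
  obtain ⟨T₀, hT₀card, hT₀max⟩ := exists_card_le_forall_sum_le (fun i => ‖x i‖) s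
  obtain ⟨n, B, hB⟩ := exists_isSortedBlocks (fun i => ‖h i‖) hs T₀ᶜ
  have hT₀B : ∀ j, Disjoint T₀ (B j) := fun j => disjoint_compl_right.mono_right (hB.subset j)
  have hcover : T₀ ∪ (range (n + 1)).biUnion B = univ := by rw [hB.biUnion_eq, union_compl]
  set σ := bestApprox s x / √s
  set head := ‖restrictL2 (T₀ ∪ B 0) h‖
  set tail := ∑ j ∈ range n, ‖restrictL2 (B (j + 1)) h‖
  have hhead := hA.head_bound hδ h hT₀card hB.card_le hB.pairwise_disjoint hT₀B hcover
  have hAh := mul_le_mul_of_nonneg_left (l2norm_mulVec_sub_le hy hxs) (Real.sqrt_nonneg (1 + δ))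
  have hcone : ∑ i ∈ T₀ᶜ, ‖h i‖ ≤ ∑ i ∈ T₀, ‖h i‖ + 2 * bestApprox s x := by
    have := sum_compl_le_of_l1norm_add_le (x := x) (h := h) (by rwa [add_sub_cancel]) T₀
    linarith [sum_compl_le_bestApprox hT₀max]
  have htail : tail ≤ head + 2 * σ := by
    have := hB.sum_norm_restrictL2_succ_le hs hT₀card hcone
    rw [mul_div_assoc] at this
    linarith [norm_restrictL2_le_of_subset (subset_union_left : T₀ ⊆ T₀ ∪ B 0) h]
  have hsplit : l2norm h ≤ head + tail := by
    rw [l2norm_eq_norm, toLp_eq_restrictL2_add_sum h hB.pairwise_disjoint hT₀B hcover]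
    exact (norm_add_le _ _).trans (add_le_add le_rfl (norm_sum_le _ _))
  have hhead_le : β * head ≤ 2 * √(1 + δ) * η + 2 * √2 * δ * σ := by
    have := mul_le_mul_of_nonneg_left htail (by positivity : 0 ≤ √2 * δ)
    linarith
  have hgoal : (2 + 4 * √2 * δ / β) * bestApprox s x / √s + 4 * √(1 + δ) / β * η
      = ((2 * β + 4 * √2 * δ) * σ + 4 * √(1 + δ) * η) / β := by
    simp only [σ]
    field_simp
  have hsplit_le := mul_le_mul_of_nonneg_left (hsplit.trans (add_le_add le_rfl htail)) hβ.le
  rw [hgoal, le_div_iff₀ hβ]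
  linarith

end Recovery

section Permutation

variable {N s : ℕ}

lemma l1norm_comp_equiv (z : Fin N → ℂ) (e : Equiv.Perm (Fin N)) : l1norm (z ∘ e) = l1norm z :=
  Equiv.sum_comp e fun i => ‖z i‖

lemma IsSparse.comp_equiv {w : Fin N → ℂ} (hw : IsSparse s w) (e : Equiv.Perm (Fin N)) :
    IsSparse s (w ∘ e) := by
  rwa [IsSparse, show {i | (w ∘ e) i ≠ 0} = e ⁻¹' {i | w i ≠ 0} from rfl,
    Set.ncard_preimage_of_injective_subset_range e.injective (by simp)]

lemma bestApprox_comp_equiv (x : Fin N → ℂ) (e : Equiv.Perm (Fin N)) :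
    bestApprox s (x ∘ e) = bestApprox s x := by
  unfold bestApprox
  congr 1
  ext t
  constructor
  · rintro ⟨w, hw, rfl⟩
    refine ⟨w ∘ e.symm, hw.comp_equiv e.symm, ?_⟩
    rw [← l1norm_comp_equiv (x - w ∘ e.symm) e]
    congr 1
    ext i
    simp
  · rintro ⟨w, hw, rfl⟩
    exact ⟨w ∘ e, hw.comp_equiv e, by rw [← l1norm_comp_equiv (x - w) e]; rfl⟩

end Permutation

/-- stable and robust recovery under the RIP.  For every
`δ ∈ (0, √2 − 1)` there are constants `C₀, C₁ > 0` (depending only on `δ`) such that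
whenever `A` has the RIP of order `2s` with constant `δ` and `‖y − Ax‖₂ ≤ η`, any ℓ¹
minimizer `x♯` subject to `‖y − Az‖₂ ≤ η` satisfies
`‖x♯ − x‖₂ ≤ C₀ σ_s(x)₁/√s + C₁ η`.  Moreover `σ_s` is invariant under flipping, so
the same bound holds for recovering the flip of `x` with the same matrix. -/
theorem rip_stable_robust_recovery (δ : ℝ) (hδ0 : 0 < δ) (hδ : δ < Real.sqrt 2 - 1) :
    ∃ C₀ : ℝ, 0 < C₀ ∧ ∃ C₁ : ℝ, 0 < C₁ ∧
      ∀ (m N s : ℕ), 1 ≤ s →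
      ∀ A : Matrix (Fin m) (Fin N) ℂ, HasRIP A (2 * s) δ →
      ∀ x : Fin N → ℂ, ∀ η : ℝ, 0 ≤ η →
      (∀ y : Fin m → ℂ, l2norm (y - A.mulVec x) ≤ η →
        ∀ xs : Fin N → ℂ,
          l2norm (y - A.mulVec xs) ≤ η →
          (∀ z : Fin N → ℂ, l2norm (y - A.mulVec z) ≤ η → l1norm xs ≤ l1norm z) →
          l2norm (xs - x) ≤ C₀ * bestApprox s x / Real.sqrt s + C₁ * η) ∧
      bestApprox s (flipVec x) = bestApprox s x ∧
      (∀ y' : Fin m → ℂ, l2norm (y' - A.mulVec (flipVec x)) ≤ η →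
        ∀ xs : Fin N → ℂ,
          l2norm (y' - A.mulVec xs) ≤ η →
          (∀ z : Fin N → ℂ, l2norm (y' - A.mulVec z) ≤ η → l1norm xs ≤ l1norm z) →
          l2norm (xs - flipVec x) ≤ C₀ * bestApprox s x / Real.sqrt s + C₁ * η) := by
  have hβ : 0 < 1 - (1 + √2) * δ := by
    nlinarith [Real.sq_sqrt (zero_le_two : (0 : ℝ) ≤ 2), Real.sqrt_nonneg 2]
  refine ⟨2 + 4 * √2 * δ / (1 - (1 + √2) * δ),
    add_pos_of_pos_of_nonneg two_pos (div_nonneg (by positivity) hβ.le),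
    4 * √(1 + δ) / (1 - (1 + √2) * δ), div_pos (by positivity) hβ, ?_⟩
  intro m N s hs A hA x η _
  have hflip : bestApprox s (flipVec x) = bestApprox s x := bestApprox_comp_equiv x Fin.revPerm
  refine ⟨fun y hy xs hxs hmin => hA.l2norm_sub_le hδ0.le hβ hs hy hxs (hmin x hy), hflip,
    fun y hy xs hxs hmin => ?_⟩
  rw [← hflip]
  exact hA.l2norm_sub_le hδ0.le hβ hs hy hxs (hmin _ hy)
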